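/- Let V and V' be left vector spaces over division rings R and R' with dim V = n ≥ 2 finite, and let g : V → V' be a non-trivial GL-mapping. Then g(x) ≠ 0 for every x ∈ V \ {0}, and g transfers any n−1 linearly independent vectors of V to n−1 linearly independent vectors of V': for every family v : Fin (n−1) → V of linearly independent vectors, the family g ∘ v is linearly independent over R'. -/

import Mathlib

/-!
`GL(V)` acts transitively on the linearly independent families of `V` with a given index type.
So if `g` vanished at one nonzero vector it would vanish at all of them. If instead
`∑ aᵢ • g (vᵢ) = 0` with `a_j ≠ 0`, pick `w` outside the span of `v` (which has only `n - 1`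
vectors) and the transvection `u` fixing `vᵢ` for `i ≠ j` and sending `v_j` to `v_j + w`;
transporting the relation by the `u'` attached to `u` yields `g (v_j + w) = g (v_j)`.
Transitivity on independent pairs spreads this to all independent pairs, and as `dim V ≥ 2` any
two nonzero vectors have a common independent partner, so `g` would be constant on `V \ {0}`.
-/

open Module Submodule Set

section LinearAlgebra

variable {K V : Type*} [DivisionRing K] [AddCommGroup V] [Module K V]

theorem Module.Basis.sumExtend_apply_inl {ι : Type*} {v : ι → V} (hv : LinearIndependent K v)
    (i : ι) : Basis.sumExtend hv (Sum.inl i) = v i := by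
  rw [Basis.sumExtend, Basis.reindex_apply, Basis.coe_extend]
  erw [Equiv.symm_symm, Equiv.trans_apply, Equiv.sumCongr_apply, Sum.map_inl,
    Equiv.Set.sumDiffSubset_apply_inl]
  rfl

theorem LinearIndependent.exists_linearEquiv_apply_eq [FiniteDimensional K V] {ι : Type*}
    {v w : ι → V} (hv : LinearIndependent K v) (hw : LinearIndependent K w) :
    ∃ u : V ≃ₗ[K] V, ∀ i, u (v i) = w i := by
  let b := Basis.sumExtend hv
  let c := Basis.sumExtend hw
  have := Module.Finite.finite_basis b
  have := Module.Finite.finite_basis c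
  have := Finite.sum_right ι (β := Basis.sumExtendIndex hv)
  have := Finite.sum_right ι (β := Basis.sumExtendIndex hw)
  have := Finite.sum_left (α := ι) (Basis.sumExtendIndex hv)
  have hcard := (finrank_eq_nat_card_basis b).symm.trans (finrank_eq_nat_card_basis c)
  rw [Nat.card_sum, Nat.card_sum, Nat.add_left_cancel_iff] at hcard
  obtain ⟨e⟩ := Finite.card_eq.mp hcard
  refine ⟨b.equiv c (Equiv.sumCongr (Equiv.refl ι) e), fun i => ?_⟩
  rw [← Basis.sumExtend_apply_inl hv, ← Basis.sumExtend_apply_inl hw]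
  simp [b, c]

theorem exists_linearEquiv_apply_eq_of_ne_zero [FiniteDimensional K V] {x y : V} (hx : x ≠ 0)
    (hy : y ≠ 0) : ∃ u : V ≃ₗ[K] V, u x = y := by
  obtain ⟨u, hu⟩ := (LinearIndependent.of_subsingleton (R := K) (v := fun _ : Unit => x) () hx)
    |>.exists_linearEquiv_apply_eq (.of_subsingleton (v := fun _ : Unit => y) () hy)
  exact ⟨u, hu ()⟩

theorem exists_linearIndependent_pair_pair_of_not_linearIndependent (h : 1 < finrank K V)
    {p q : V} (hp : p ≠ 0) (hq : q ≠ 0) (hpq : ¬ LinearIndependent K ![p, q]) :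
    ∃ r, LinearIndependent K ![p, r] ∧ LinearIndependent K ![q, r] := by
  obtain ⟨r, hpr⟩ := exists_linearIndependent_pair_of_one_lt_finrank h hp
  obtain ⟨b, rfl⟩ : ∃ b : K, b • p = q := by simpa [LinearIndependent.pair_iff' hp] using hpq
  refine ⟨r, hpr, (LinearIndependent.pair_iff' hq).mpr fun a har => ?_⟩
  rw [smul_smul] at har
  exact (LinearIndependent.pair_iff' hp).mp hpr _ har

theorem apply_eq_apply_of_forall_pair_linearIndependent {α : Type*} (h : 1 < finrank K V)
    {g : V → α} (hg : ∀ p q, LinearIndependent K ![p, q] → g p = g q) {x y : V} (hx : x ≠ 0)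
    (hy : y ≠ 0) : g x = g y := by
  by_cases hxy : LinearIndependent K ![x, y]
  · exact hg x y hxy
  · obtain ⟨r, hxr, hyr⟩ :=
      exists_linearIndependent_pair_pair_of_not_linearIndependent h hx hy hxy
    rw [hg x r hxr, hg y r hyr]

theorem LinearIndependent.exists_linearEquiv_add_apply {ι : Type*} {v : ι → V}
    (hv : LinearIndependent K v) (hspan : span K (range v) ≠ ⊤) (j : ι) :
    ∃ w, LinearIndependent K ![v j, v j + w] ∧
      ∃ u : V ≃ₗ[K] V, u (v j) = v j + w ∧ ∀ i ≠ j, u (v i) = v i := by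
  set b := Basis.sumExtend hv
  have hbv : ∀ i, b (.inl i) = v i := Basis.sumExtend_apply_inl hv
  obtain ⟨s⟩ : Nonempty (Basis.sumExtendIndex hv) := by
    by_contra! hS
    refine hspan (eq_top_iff.mpr (b.span_eq ▸ span_le.mpr ?_))
    rintro _ ⟨i | s, rfl⟩
    · exact hbv i ▸ subset_span (mem_range_self i)
    · exact hS.elim s
  have hf : b.coord (.inl j) (b (.inr s)) = 0 := by simp
  refine ⟨b (.inr s), ?_, LinearEquiv.transvection hf, ?_, fun i hij => ?_⟩
  · rw [LinearIndependent.pair_add_right_iff, ← hbv]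
    have hpair : ⇑b ∘ ![.inl j, .inr s] = ![b (.inl j), b (.inr s)] := by
      ext i; fin_cases i <;> rfl
    exact hpair ▸ b.linearIndependent.comp _ (injective_pair_iff_ne.mpr Sum.inl_ne_inr)
  · rw [LinearEquiv.transvection.apply, ← hbv]
    simp only [Basis.coord_apply, Basis.repr_self, Finsupp.single_eq_same, one_smul]
  · rw [LinearEquiv.transvection.apply, ← hbv]
    simp [hij]

end LinearAlgebra

def IsGLMapping (R R' : Type*) {V V' : Type*} [DivisionRing R] [DivisionRing R']
    [AddCommGroup V] [Module R V] [AddCommGroup V'] [Module R' V'] (g : V → V') : Prop :=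
  ∀ u : V ≃ₗ[R] V, ∃ u' : V' ≃ₗ[R'] V', g ∘ ⇑u = ⇑u' ∘ g

namespace IsGLMapping

variable {R R' V V' : Type*} [DivisionRing R] [DivisionRing R']
  [AddCommGroup V] [Module R V] [AddCommGroup V'] [Module R' V'] {g : V → V'}

theorem exists_apply_linearEquiv (hg : IsGLMapping R R' g) (u : V ≃ₗ[R] V) :
    ∃ u' : V' ≃ₗ[R'] V', ∀ x, g (u x) = u' (g x) :=
  let ⟨u', hu'⟩ := hg u
  ⟨u', congrFun hu'⟩

theorem apply_eq_zero_of_apply_eq_zero [FiniteDimensional R V] (hg : IsGLMapping R R' g)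
    {x y : V} (hx : x ≠ 0) (hgx : g x = 0) (hy : y ≠ 0) : g y = 0 := by
  obtain ⟨u, rfl⟩ := exists_linearEquiv_apply_eq_of_ne_zero (K := R) hx hy
  obtain ⟨u', hu'⟩ := hg.exists_apply_linearEquiv u
  rw [hu', hgx, map_zero]

theorem apply_eq_apply_of_linearIndependent_pair [FiniteDimensional R V]
    (hg : IsGLMapping R R' g) {p q p' q' : V} (hpq : LinearIndependent R ![p, q])
    (hgpq : g p = g q) (hpq' : LinearIndependent R ![p', q']) : g p' = g q' := by
  obtain ⟨u, hu⟩ := hpq.exists_linearEquiv_apply_eq hpq'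
  obtain ⟨u', hu'⟩ := hg.exists_apply_linearEquiv u
  have hp : u p = p' := by simpa using hu 0
  have hq : u q = q' := by simpa using hu 1
  rw [← hp, ← hq, hu', hu', hgpq]

theorem exists_pair_apply_eq_of_not_linearIndependent (hg : IsGLMapping R R' g) {ι : Type*}
    {v : ι → V} (hv : LinearIndependent R v) (hspan : span R (range v) ≠ ⊤)
    (hgv : ¬ LinearIndependent R' (g ∘ v)) :
    ∃ p q, LinearIndependent R ![p, q] ∧ g p = g q := by
  obtain ⟨s, a, hsum, j, hjs, haj⟩ := not_linearIndependent_iff.mp hgv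
  obtain ⟨w, hpair, u, huj, hui⟩ := hv.exists_linearEquiv_add_apply hspan j
  obtain ⟨u', hu'⟩ := hg.exists_apply_linearEquiv u
  have hsum_u : ∑ i ∈ s, a i • g (u (v i)) = 0 := by
    simp_rw [hu', ← map_smul, ← map_sum]
    simpa using congrArg u' hsum
  have hdiff : ∑ i ∈ s, a i • (g (u (v i)) - g (v i)) = 0 := by
    simpa [smul_sub, Finset.sum_sub_distrib, hsum_u] using hsum
  rw [Finset.sum_eq_single_of_mem j hjs fun i _ hij => by rw [hui i hij, sub_self, smul_zero],
    smul_eq_zero, huj, sub_eq_zero] at hdiff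
  exact ⟨v j, v j + w, hpair, (hdiff.resolve_left haj).symm⟩

end IsGLMapping

/-- **Lemma 5 (Pankov).** A non-trivial GL-mapping `g : V → V'` (with `dim V = n ≥ 2`)
satisfies `g(x) ≠ 0` for all `x ≠ 0` and sends any `n−1` linearly independent vectors
to linearly independent vectors. -/
theorem stmt_9 {R R' V V' : Type*} [DivisionRing R] [DivisionRing R']
    [AddCommGroup V] [Module R V] [AddCommGroup V'] [Module R' V']
    (n : ℕ) (hn : 2 ≤ n) [FiniteDimensional R V] (hdim : Module.finrank R V = n)
    (g : V → V')
    (hGL : ∀ u : V ≃ₗ[R] V, ∃ u' : V' ≃ₗ[R'] V', g ∘ ⇑u = ⇑u' ∘ g)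
    (hnt : ∃ x y : V, x ≠ 0 ∧ y ≠ 0 ∧ g x ≠ g y) :
    (∀ x : V, x ≠ 0 → g x ≠ 0) ∧
    (∀ v : Fin (n - 1) → V, LinearIndependent R v → LinearIndependent R' (g ∘ v)) := by
  have hg : IsGLMapping R R' g := hGL
  obtain ⟨x₀, y₀, hx₀, hy₀, hg₀⟩ := hnt
  refine ⟨fun x hx hgx => hg₀ ?_, fun v hv => by_contra fun hgv => hg₀ ?_⟩
  · rw [hg.apply_eq_zero_of_apply_eq_zero hx hgx hx₀,
      hg.apply_eq_zero_of_apply_eq_zero hx hgx hy₀]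
  · have hspan : span R (range v) ≠ ⊤ := fun htop => by
      have := linearIndependent_iff_card_eq_finrank_span.mp hv
      rw [Set.finrank, htop, finrank_top, Fintype.card_fin] at this
      omega
    obtain ⟨p, q, hpq, hgpq⟩ := hg.exists_pair_apply_eq_of_not_linearIndependent hv hspan hgv
    exact apply_eq_apply_of_forall_pair_linearIndependent (by omega)
      (fun _ _ => hg.apply_eq_apply_of_linearIndependent_pair hpq hgpq) hx₀ hy₀
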